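/- arXiv:2404.16735 — 2 statements merged into one kernel-verified Lean document; each statement's English description precedes it below -/
import Mathlib

section
/- Let x_{2n,1}(α) denote the first (smallest) positive zero of the Jacobi polynomial P_{2n}^{(α,α)}. Then for all integers n ≥ 3 and all real α ≥ −1/2, x_{2n,1}(α) ≥ π/(4·√((α + 1/2 + n)(n + 2))). -/
/-!
`P = P_{2n}^{(α,α)}` solves `(1 - t²) P'' - 2(α + 1) t P' + c P = 0` with `c = 2n(2n + 2α + 1)`,
and `u = (1 - t²)^((α + 1)/2) P` solves `(1 - t²)² u'' = ((α² - 1) t² - (α + 1 + c)(1 - t²)) u`.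
Since `P` is even, `-x` and `x` are consecutive zeros of `u`. If `x < π / (4 √K)` with
`K = (α + 1/2 + n)(n + 2)`, then `cos (2 √K t)` is positive on `[-x, x]`, and Sturm comparison with
it gives a point of `(-x, x)` where `(α² - 1) t² - (α + 1 + c)(1 - t²) + 4K (1 - t²)² ≤ 0`.
For `n ≥ 3` and `α ≥ -1/2` this coefficient is positive there.
-/

/-- Recurrence coefficient `a_n(α)` for Jacobi polynomials with equal parameters. -/
noncomputable def jacobiA (α : ℝ) (n : ℕ) : ℝ :=
  ((n : ℝ) + 1) * ((n : ℝ) + 2 * α + 1) / ((2 * (n : ℝ) + 2 * α + 1) * ((n : ℝ) + α + 1))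

/-- Recurrence coefficient `g_n(α)` for Jacobi polynomials with equal parameters. -/
noncomputable def jacobiG (α : ℝ) (n : ℕ) : ℝ :=
  ((n : ℝ) + α) / (2 * (n : ℝ) + 2 * α + 1)

/-- The Jacobi polynomial `P_n^{(α,α)}`, defined via the standard three-term recurrence
with initial conditions `P_0 = 1` and `P_1(x) = (α+1)x`. -/
noncomputable def jacobiP (α : ℝ) : ℕ → ℝ → ℝ
  | 0 => fun _ => 1
  | 1 => fun x => (α + 1) * x
  | (n + 2) => fun x =>
      (x * jacobiP α (n + 1) x - jacobiG α (n + 1) * jacobiP α n x) / jacobiA α (n + 1)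

open Real

open Polynomial Set

theorem nonneg_of_hasDerivAt_of_eq_zero_of_pos_right {u : ℝ → ℝ} {u' a b : ℝ} (hab : a < b)
    (hu : HasDerivAt u u' a) (ha : u a = 0) (hpos : ∀ t ∈ Ioo a b, 0 < u t) : 0 ≤ u' := by
  refine ge_of_tendsto ((hasDerivWithinAt_iff_tendsto_slope' self_notMem_Ioi).mp
    hu.hasDerivWithinAt) ?_
  filter_upwards [Ioo_mem_nhdsGT hab] with t ht
  rw [slope_def_field, ha, sub_zero]
  exact div_nonneg (hpos t ht).le (sub_nonneg.2 ht.1.le)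

theorem nonpos_of_hasDerivAt_of_eq_zero_of_pos_left {u : ℝ → ℝ} {u' a b : ℝ} (hab : a < b)
    (hu : HasDerivAt u u' b) (hb : u b = 0) (hpos : ∀ t ∈ Ioo a b, 0 < u t) : u' ≤ 0 := by
  refine le_of_tendsto ((hasDerivWithinAt_iff_tendsto_slope' self_notMem_Iio).mp
    hu.hasDerivWithinAt) ?_
  filter_upwards [Ioo_mem_nhdsLT hab] with t ht
  rw [slope_def_field, hb, sub_zero]
  exact div_nonpos_of_nonneg_of_nonpos (hpos t ht).le (sub_nonpos.2 ht.2.le)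

/-- Sturm comparison: the Wronskian `u' v - u v'` is `≥ 0` at `a` and `≤ 0` at `b`, so by the mean
value theorem its derivative `u'' v - u v''` is somewhere `≤ 0`. -/
theorem exists_mem_Ioo_deriv2_mul_le_mul_deriv2 {u u' u'' v v' v'' : ℝ → ℝ} {a b : ℝ} (hab : a < b)
    (hu : ∀ t ∈ Icc a b, HasDerivAt u (u' t) t) (hu' : ∀ t ∈ Icc a b, HasDerivAt u' (u'' t) t)
    (hv : ∀ t ∈ Icc a b, HasDerivAt v (v' t) t) (hv' : ∀ t ∈ Icc a b, HasDerivAt v' (v'' t) t)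
    (hua : u a = 0) (hub : u b = 0) (hu_pos : ∀ t ∈ Ioo a b, 0 < u t)
    (hva : 0 ≤ v a) (hvb : 0 ≤ v b) :
    ∃ t ∈ Ioo a b, u'' t * v t ≤ u t * v'' t := by
  have hW : ∀ t ∈ Icc a b, HasDerivAt (fun s ↦ u' s * v s - u s * v' s)
      (u'' t * v t - u t * v'' t) t := fun t ht ↦
    (((hu' t ht).mul (hv t ht)).sub ((hu t ht).mul (hv' t ht))).congr_deriv (by ring)
  obtain ⟨t, ht, hslope⟩ := exists_hasDerivAt_eq_slope (fun s ↦ u' s * v s - u s * v' s) _ hab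
    (fun s hs ↦ (hW s hs).continuousAt.continuousWithinAt) fun s hs ↦ hW s (Ioo_subset_Icc_self hs)
  have hWa : 0 ≤ u' a * v a - u a * v' a := by
    rw [hua, zero_mul, sub_zero]
    exact mul_nonneg (nonneg_of_hasDerivAt_of_eq_zero_of_pos_right hab
      (hu a (left_mem_Icc.2 hab.le)) hua hu_pos) hva
  have hWb : u' b * v b - u b * v' b ≤ 0 := by
    rw [hub, zero_mul, sub_zero]
    exact mul_nonpos_of_nonpos_of_nonneg (nonpos_of_hasDerivAt_of_eq_zero_of_pos_left hab
      (hu b (right_mem_Icc.2 hab.le)) hub hu_pos) hvb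
  refine ⟨t, ht, sub_nonpos.1 ?_⟩
  rw [hslope]
  exact div_nonpos_of_nonpos_of_nonneg (by linarith) (sub_nonneg.2 hab.le)

theorem exists_mem_Ioo_deriv2_add_sq_mul_nonpos {u u' u'' : ℝ → ℝ} {a b θ : ℝ} (hab : a < b)
    (hθ : |θ| * (b - a) < π)
    (hu : ∀ t ∈ Icc a b, HasDerivAt u (u' t) t) (hu' : ∀ t ∈ Icc a b, HasDerivAt u' (u'' t) t)
    (hua : u a = 0) (hub : u b = 0) (hu_pos : ∀ t ∈ Ioo a b, 0 < u t) :
    ∃ t ∈ Ioo a b, u'' t + θ ^ 2 * u t ≤ 0 := by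
  set m := (a + b) / 2 with hm
  have hv_pos : ∀ t ∈ Icc a b, 0 < cos (θ * (t - m)) := fun t ht ↦ by
    have : |θ * (t - m)| < π / 2 := by
      rw [abs_mul]
      have : |t - m| ≤ (b - a) / 2 := abs_le.2 ⟨by linarith [ht.1, hm], by linarith [ht.2, hm]⟩
      nlinarith [abs_nonneg θ]
    exact cos_pos_of_mem_Ioo (abs_lt.1 this)
  have hv : ∀ t, HasDerivAt (fun s ↦ θ * (s - m)) θ t := fun t ↦ by
    simpa using ((hasDerivAt_id t).sub_const m).const_mul θ
  obtain ⟨t, ht, hle⟩ := exists_mem_Ioo_deriv2_mul_le_mul_deriv2 hab hu hu'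
    (v' := fun t ↦ -sin (θ * (t - m)) * θ) (v'' := fun t ↦ -θ ^ 2 * cos (θ * (t - m)))
    (fun t _ ↦ (hv t).cos) (fun t _ ↦ ((hv t).sin.neg.mul_const θ).congr_deriv (by ring))
    hua hub hu_pos (hv_pos a (left_mem_Icc.2 hab.le)).le (hv_pos b (right_mem_Icc.2 hab.le)).le
  refine ⟨t, ht, nonpos_of_mul_nonpos_left ?_ (hv_pos t (Ioo_subset_Icc_self ht))⟩
  linarith

theorem IsPreconnected.mul_pos_of_ne_zero {X : Type*} [TopologicalSpace X] {s : Set X} {f : X → ℝ}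
    (hs : IsPreconnected s) (hf : ContinuousOn f s) (hf₀ : ∀ x ∈ s, f x ≠ 0) {a b : X}
    (ha : a ∈ s) (hb : b ∈ s) : 0 < f a * f b := by
  by_contra! h
  obtain ⟨z, hz, hz₀⟩ : (0 : ℝ) ∈ f '' s := by
    rcases mul_nonpos_iff.1 h with ⟨h₁, h₂⟩ | ⟨h₁, h₂⟩
    · exact hs.intermediate_value hb ha hf ⟨h₂, h₁⟩
    · exact hs.intermediate_value ha hb hf ⟨h₁, h₂⟩
  exact hf₀ z hz hz₀

theorem exists_hasDerivAt_one_sub_sq_rpow_mul {f f' f'' : ℝ → ℝ} {α c : ℝ}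
    (hf : ∀ t ∈ Ioo (-1 : ℝ) 1, HasDerivAt f (f' t) t)
    (hf' : ∀ t ∈ Ioo (-1 : ℝ) 1, HasDerivAt f' (f'' t) t)
    (hode : ∀ t ∈ Ioo (-1 : ℝ) 1, (1 - t ^ 2) * f'' t - 2 * (α + 1) * t * f' t + c * f t = 0) :
    ∃ u' u'' : ℝ → ℝ, ∀ t ∈ Ioo (-1 : ℝ) 1,
      HasDerivAt (fun s ↦ (1 - s ^ 2) ^ ((α + 1) / 2) * f s) (u' t) t ∧ HasDerivAt u' (u'' t) t ∧
      (1 - t ^ 2) ^ 2 * u'' t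
        = ((α ^ 2 - 1) * t ^ 2 - (α + 1 + c) * (1 - t ^ 2))
          * ((1 - t ^ 2) ^ ((α + 1) / 2) * f t) := by
  obtain ⟨e, rfl⟩ : ∃ e, α = 2 * e - 1 := ⟨(α + 1) / 2, by ring⟩
  rw [show (2 * e - 1 + 1) / 2 = e by ring]
  have hA_pos : ∀ t ∈ Ioo (-1 : ℝ) 1, 0 < 1 - t ^ 2 := fun t ht ↦ by
    nlinarith [ht.1, ht.2]
  have hpow : ∀ r, ∀ t ∈ Ioo (-1 : ℝ) 1,
      HasDerivAt (fun s ↦ (1 - s ^ 2) ^ r) (r * (1 - t ^ 2) ^ (r - 1) * -(2 * t)) t :=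
    fun r t ht ↦ (((hasDerivAt_pow 2 t).const_sub 1).rpow_const
      (Or.inl (hA_pos t ht).ne')).congr_deriv (by push_cast; ring)
  refine ⟨fun t ↦ e * (1 - t ^ 2) ^ (e - 1) * -(2 * t) * f t + (1 - t ^ 2) ^ e * f' t,
    fun t ↦ -(2 * e) * (1 - t ^ 2) ^ (e - 1) * f t
      + 4 * e * (e - 1) * t ^ 2 * (1 - t ^ 2) ^ (e - 2) * f t
      - 4 * e * t * (1 - t ^ 2) ^ (e - 1) * f' t + (1 - t ^ 2) ^ e * f'' t,
    fun t ht ↦ ⟨(hpow e t ht).mul (hf t ht), ?_, ?_⟩⟩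
  · have hlin : HasDerivAt (fun s : ℝ ↦ -(2 * s)) (-(2 * 1)) t :=
      ((hasDerivAt_id t).const_mul 2).neg
    refine (((((hpow (e - 1) t ht).const_mul e).mul hlin).mul (hf t ht)).add
      ((hpow e t ht).mul (hf' t ht))).congr_deriv ?_
    rw [show e - 1 - 1 = e - 2 by ring, Pi.mul_apply]
    ring
  · have hA := hA_pos t ht
    dsimp only
    rw [rpow_sub hA, rpow_sub hA, rpow_one, rpow_two]
    field_simp
    linear_combination (1 - t ^ 2) * hode t ht

theorem exists_mem_Ioo_liouville_coeff_nonpos {f f' f'' : ℝ → ℝ} {α c a b θ : ℝ}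
    (ha : -1 < a) (hab : a < b) (hb : b < 1) (hθ : |θ| * (b - a) < π)
    (hf : ∀ t ∈ Ioo (-1 : ℝ) 1, HasDerivAt f (f' t) t)
    (hf' : ∀ t ∈ Ioo (-1 : ℝ) 1, HasDerivAt f' (f'' t) t)
    (hode : ∀ t ∈ Ioo (-1 : ℝ) 1, (1 - t ^ 2) * f'' t - 2 * (α + 1) * t * f' t + c * f t = 0)
    (hfa : f a = 0) (hfb : f b = 0) (hf_ne : ∀ t ∈ Ioo a b, f t ≠ 0) :
    ∃ t ∈ Ioo a b,
      (α ^ 2 - 1) * t ^ 2 - (α + 1 + c) * (1 - t ^ 2) + θ ^ 2 * (1 - t ^ 2) ^ 2 ≤ 0 := by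
  have hsub : Icc a b ⊆ Ioo (-1) 1 := Icc_subset_Ioo ha hb
  set σ := f ((a + b) / 2)
  have hσf : ∀ t ∈ Ioo a b, 0 < σ * f t := fun t ht ↦
    isPreconnected_Ioo.mul_pos_of_ne_zero
      (fun s hs ↦ (hf s (hsub (Ioo_subset_Icc_self hs))).continuousAt.continuousWithinAt) hf_ne
      ⟨by linarith, by linarith⟩ ht
  obtain ⟨u', u'', hu⟩ :=
    exists_hasDerivAt_one_sub_sq_rpow_mul (f := fun t ↦ σ * f t) (α := α) (c := c)
    (fun t ht ↦ (hf t ht).const_mul σ) (fun t ht ↦ (hf' t ht).const_mul σ)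
    fun t ht ↦ by linear_combination σ * hode t ht
  have hw_pos : ∀ t ∈ Icc a b, 0 < (1 - t ^ 2) ^ ((α + 1) / 2) := fun t ht ↦
    rpow_pos_of_pos (by nlinarith [(hsub ht).1, (hsub ht).2]) _
  obtain ⟨t, ht, hle⟩ := exists_mem_Ioo_deriv2_add_sq_mul_nonpos hab hθ
    (fun t ht ↦ (hu t (hsub ht)).1) (fun t ht ↦ (hu t (hsub ht)).2.1)
    (by simp [hfa]) (by simp [hfb])
    fun t ht ↦ mul_pos (hw_pos t (Ioo_subset_Icc_self ht)) (hσf t ht)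
  refine ⟨t, ht, nonpos_of_mul_nonpos_left (b := (1 - t ^ 2) ^ ((α + 1) / 2) * (σ * f t)) ?_
    (mul_pos (hw_pos t (Ioo_subset_Icc_self ht)) (hσf t ht))⟩
  calc _ = (1 - t ^ 2) ^ 2 * (u'' t + θ ^ 2 * ((1 - t ^ 2) ^ ((α + 1) / 2) * (σ * f t))) := by
        rw [mul_add, (hu t (hsub (Ioo_subset_Icc_self ht))).2.2]
        ring
    _ ≤ 0 := mul_nonpos_of_nonneg_of_nonpos (sq_nonneg _) hle

noncomputable def jacobiPoly (α : ℝ) : ℕ → ℝ[X]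
  | 0 => 1
  | 1 => C (α + 1) * X
  | (n + 2) => C (jacobiA α (n + 1))⁻¹ *
      (X * jacobiPoly α (n + 1) - C (jacobiG α (n + 1)) * jacobiPoly α n)

theorem eval_jacobiPoly (α : ℝ) (n : ℕ) (x : ℝ) : (jacobiPoly α n).eval x = jacobiP α n x := by
  induction n using Nat.twoStepInduction with
  | zero => simp [jacobiP, jacobiPoly]
  | one => simp [jacobiP, jacobiPoly]
  | more n ih₁ ih₂ =>
    simp [jacobiP, jacobiPoly, ih₁, ih₂, div_eq_inv_mul, mul_comm]

theorem jacobiP_neg (α : ℝ) (n : ℕ) (x : ℝ) : jacobiP α n (-x) = (-1) ^ n * jacobiP α n x := by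
  induction n using Nat.twoStepInduction with
  | zero => simp [jacobiP]
  | one => simp [jacobiP]
  | more n ih₁ ih₂ =>
    simp only [jacobiP, ih₁, ih₂, pow_succ]
    ring

theorem jacobiP_two_mul_neg (α : ℝ) (n : ℕ) (x : ℝ) :
    jacobiP α (2 * n) (-x) = jacobiP α (2 * n) x := by
  rw [jacobiP_neg, (even_two_mul n).neg_one_pow, one_mul]

section

variable {α : ℝ} (hα : -1 < α)
include hα

theorem jacobiA_pos (n : ℕ) : 0 < jacobiA α (n + 1) := by
  unfold jacobiA
  have : (0 : ℝ) ≤ n := n.cast_nonneg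
  push_cast
  apply div_pos <;> apply mul_pos <;> linarith

theorem jacobiG_pos (n : ℕ) : 0 < jacobiG α (n + 1) := by
  unfold jacobiG
  have : (0 : ℝ) ≤ n := n.cast_nonneg
  push_cast
  apply div_pos <;> linarith

theorem jacobiP_two_mul_zero_ne_zero (k : ℕ) : jacobiP α (2 * k) 0 ≠ 0 := by
  induction k with
  | zero => simp [jacobiP]
  | succ k ih =>
    have hodd : jacobiP α (2 * k + 1) 0 = 0 := by
      have h := jacobiP_neg α (2 * k + 1) 0
      rw [neg_zero, pow_succ, (even_two_mul k).neg_one_pow] at h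
      linarith
    rw [show 2 * (k + 1) = 2 * k + 2 by ring]
    simp only [jacobiP, zero_mul, hodd, zero_sub, neg_div]
    exact neg_ne_zero.mpr
      (div_ne_zero (mul_ne_zero (jacobiG_pos hα _).ne' ih) (jacobiA_pos hα _).ne')

theorem jacobiPoly_add_two (n : ℕ) :
    C (((n : ℝ) + 2) * (n + 2 * α + 2)) * jacobiPoly α (n + 2)
      = C ((2 * (n : ℝ) + 2 * α + 3) * (n + α + 2)) * (X * jacobiPoly α (n + 1))
        - C (((n : ℝ) + α + 1) * (n + α + 2)) * jacobiPoly α n := by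
  have : (0 : ℝ) ≤ n := n.cast_nonneg
  have hA : ((n : ℝ) + 2) * (n + 2 * α + 2) * (jacobiA α (n + 1))⁻¹
      = (2 * (n : ℝ) + 2 * α + 3) * (n + α + 2) := by
    have : (n : ℝ) + 2 * α + 2 ≠ 0 := by linarith
    have : (n : ℝ) + 2 ≠ 0 := by linarith
    rw [show jacobiA α (n + 1)
        = ((n : ℝ) + 2) * (n + 2 * α + 2) / ((2 * n + 2 * α + 3) * (n + α + 2))
      by unfold jacobiA; push_cast; ring]
    field_simp
  have hG : (2 * (n : ℝ) + 2 * α + 3) * (n + α + 2) * jacobiG α (n + 1)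
      = ((n : ℝ) + α + 1) * (n + α + 2) := by
    have : 2 * (n : ℝ) + 2 * α + 3 ≠ 0 := by linarith
    rw [show jacobiG α (n + 1) = ((n : ℝ) + α + 1) / (2 * n + 2 * α + 3)
      by unfold jacobiG; push_cast; ring, mul_div_assoc', div_eq_iff this]
    ring
  rw [jacobiPoly, ← hG, ← hA]
  simp only [map_mul]
  ring

theorem derivative_jacobiPoly_add_two (n : ℕ) :
    C (((n : ℝ) + 2) * (n + 2 * α + 2)) * derivative (jacobiPoly α (n + 2))
      = C ((2 * (n : ℝ) + 2 * α + 3) * (n + α + 2))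
          * (jacobiPoly α (n + 1) + X * derivative (jacobiPoly α (n + 1)))
        - C (((n : ℝ) + α + 1) * (n + α + 2)) * derivative (jacobiPoly α n) := by
  simpa [derivative_mul, mul_add] using congrArg derivative (jacobiPoly_add_two hα n)

theorem one_sub_X_sq_mul_derivative_jacobiPoly (n : ℕ) :
    (1 - X ^ 2) * derivative (jacobiPoly α (n + 1))
      = C (-((n : ℝ) + 1)) * X * jacobiPoly α (n + 1) + C ((n : ℝ) + α + 1) * jacobiPoly α n := by
  induction n using Nat.twoStepInduction with
  | zero =>
    simp only [jacobiPoly, map_add, map_one, derivative_mul, derivative_C,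
      derivative_one, add_zero, zero_mul, derivative_X, mul_one, zero_add, CharP.cast_eq_zero,
      map_neg, neg_mul, one_mul]
    ring
  | one =>
    have h := jacobiPoly_add_two hα 0
    have h' := derivative_jacobiPoly_add_two hα 0
    have hA : (0 : ℝ) < 2 * (2 * α + 2) := by linarith
    apply mul_left_cancel₀ (C_ne_zero.mpr hA.ne')
    simp only [jacobiPoly, Nat.cast_zero, Nat.cast_one, derivative_mul, derivative_C, derivative_X,
      derivative_one, zero_mul, mul_zero, mul_one, zero_add, add_zero, sub_zero,
      map_mul, map_add, map_neg, map_ofNat, C_1] at h h' ⊢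
    linear_combination (1 - X ^ 2) * h' + 2 * X * h
  | more n ih₁ ih₂ =>
    have h₁ := jacobiPoly_add_two hα n
    have h₂ := jacobiPoly_add_two hα (n + 1)
    have h₂' := derivative_jacobiPoly_add_two hα (n + 1)
    push_cast at h₂ h₂' ih₂ ⊢
    have : (0 : ℝ) ≤ n := n.cast_nonneg
    have e₁ : (n : ℝ) + α + 1 ≠ 0 := by linarith
    have e₂ : (n : ℝ) + α + 2 ≠ 0 := by linarith
    have e₃ : (n : ℝ) + 3 ≠ 0 := by linarith
    have e₄ : (n : ℝ) + 2 * α + 3 ≠ 0 := by linarith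
    apply mul_left_cancel₀ (C_ne_zero.mpr (mul_ne_zero (mul_ne_zero e₁ e₂) (mul_ne_zero e₃ e₄)))
    simp only [map_mul, map_add, map_neg, map_ofNat, C_1] at h₁ h₂ h₂' ih₁ ih₂ ⊢
    set m : ℝ[X] := C (n : ℝ)
    set a : ℝ[X] := C α
    linear_combination
      ((m + a + 1) * (m + a + 2) * (1 - X ^ 2)) * h₂'
      + ((m + a + 1) * (m + a + 2) * (m + 3) * X) * h₂
      + ((m + a + 1) * (m + a + 2) * ((2 * m + 2 * a + 5) * (m + a + 3)) * X) * ih₂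
      - ((m + a + 1) * (m + a + 2) * (m + a + 2) * (m + a + 3)) * ih₁
      - ((m + a + 2) * (m + a + 3) * (m + a + 1)) * h₁

theorem jacobiPoly_ode (n : ℕ) :
    (1 - X ^ 2) * derivative (derivative (jacobiPoly α n))
      - C (2 * (α + 1)) * X * derivative (jacobiPoly α n)
      + C ((n : ℝ) * (n + 2 * α + 1)) * jacobiPoly α n = 0 := by
  match n with
  | 0 => simp [jacobiPoly]
  | 1 =>
    simp only [jacobiPoly, derivative_mul, derivative_C, derivative_X, derivative_one, zero_mul,
      mul_zero, zero_add, mul_one, map_mul, map_add, C_1, C_ofNat, Nat.cast_one, one_mul, add_zero]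
    ring
  | n + 2 =>
    have hW : (1 - X ^ 2 : ℝ[X]) ≠ 0 := fun h ↦ by simpa using congrArg (eval 0) h
    apply mul_left_cancel₀ hW
    have h₂ := one_sub_X_sq_mul_derivative_jacobiPoly hα (n + 1)
    push_cast at h₂ ⊢
    have h₂' := congrArg derivative h₂
    simp only [derivative_mul, derivative_add, derivative_sub, derivative_one, derivative_X_sq,
      derivative_X, derivative_C, zero_mul, mul_one, zero_sub, zero_add] at h₂'
    have h₁ := one_sub_X_sq_mul_derivative_jacobiPoly hα n
    have hrec := jacobiPoly_add_two hα n
    simp only [map_mul, map_add, map_neg, map_ofNat, C_1] at h₁ h₂ h₂' hrec ⊢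
    linear_combination (1 - X ^ 2) * h₂' - (C (n : ℝ) + 2 + 2 * C α) * X * h₂
      + (C (n : ℝ) + 2 + C α) * h₁ + hrec

theorem exists_hasDerivAt_jacobiP_ode (n : ℕ) :
    ∃ f' f'' : ℝ → ℝ, ∀ t, HasDerivAt (jacobiP α n) (f' t) t ∧ HasDerivAt f' (f'' t) t ∧
      (1 - t ^ 2) * f'' t - 2 * (α + 1) * t * f' t + n * (n + 2 * α + 1) * jacobiP α n t = 0 := by
  set p := jacobiPoly α n
  have hp : jacobiP α n = fun t ↦ p.eval t := funext fun t ↦ (eval_jacobiPoly α n t).symm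
  refine ⟨fun t ↦ (derivative p).eval t, fun t ↦ (derivative (derivative p)).eval t,
    fun t ↦ ⟨hp ▸ p.hasDerivAt t, (derivative p).hasDerivAt t, ?_⟩⟩
  have h := congrArg (eval t) (jacobiPoly_ode hα n)
  simp only [eval_add, eval_sub, eval_mul, eval_C, eval_X, eval_pow, eval_one, eval_zero] at h
  rw [hp]
  linear_combination h

theorem jacobiP_two_mul_ne_zero_of_abs_lt {n : ℕ} {x t : ℝ}
    (hx : IsLeast {y : ℝ | 0 < y ∧ jacobiP α (2 * n) y = 0} x) (ht : |t| < x) :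
    jacobiP α (2 * n) t ≠ 0 := by
  intro h₀
  rcases eq_or_ne t 0 with rfl | ht₀
  · exact jacobiP_two_mul_zero_ne_zero hα n h₀
  · have habs : jacobiP α (2 * n) |t| = 0 := by
      rcases abs_choice t with h | h <;> rw [h]
      · exact h₀
      · rwa [jacobiP_two_mul_neg]
    exact (hx.2 ⟨abs_pos.2 ht₀, habs⟩).not_gt ht

end

theorem liouville_coeff_pos {α m t : ℝ} (hα : -1 / 2 ≤ α) (hm : 3 ≤ m)
    (ht : |t| < π / (4 * √((α + 1 / 2 + m) * (m + 2)))) :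
    0 < (α ^ 2 - 1) * t ^ 2 - (α + 1 + 2 * m * (2 * m + 2 * α + 1)) * (1 - t ^ 2)
      + 4 * ((α + 1 / 2 + m) * (m + 2)) * (1 - t ^ 2) ^ 2 := by
  set L := α + 1 / 2 + m with hL_def
  have hLm : 0 < L * (m + 2) := by nlinarith
  have ht : 16 * (L * (m + 2)) * t ^ 2 < 10 := by
    rw [lt_div_iff₀ (by positivity)] at ht
    have h := pow_lt_pow_left₀ ht (by positivity) two_ne_zero
    rw [mul_pow, mul_pow, sq_sqrt hLm.le, sq_abs] at h
    nlinarith [pi_lt_d2, pi_pos]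
  have hL : 3 ≤ L := by linarith
  have ht₀ := sq_nonneg t
  have hmt : (m + 2) * t ^ 2 < 5 / 24 := by nlinarith
  have ht₁ : t ^ 2 < 1 / 24 := by nlinarith
  have hmain : 4 * L * (23 / 24 * (43 / 24)) ≤ 4 * L * ((1 - t ^ 2) * (2 - (m + 2) * t ^ 2)) := by
    refine mul_le_mul_of_nonneg_left ?_ (by linarith)
    calc 23 / 24 * (43 / 24 : ℝ) ≤ (1 - t ^ 2) * (43 / 24) := by gcongr; linarith
      _ ≤ (1 - t ^ 2) * (2 - (m + 2) * t ^ 2) := by gcongr <;> linarith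
  have hsmall : -(α + 1) * (1 + t ^ 2 / 2) ≤ (α + 1) * (α * t ^ 2 - 1) := by
    have : 0 ≤ (α + 1) * ((α + 1 / 2) * t ^ 2) := by
      apply mul_nonneg <;> [linarith; exact mul_nonneg (by linarith) ht₀]
    linarith
  nlinarith

theorem jacobi_first_positive_zero_lower_bound (n : ℕ) (hn : 3 ≤ n) (α : ℝ)
    (hα : -1/2 ≤ α) (x : ℝ)
    (hx : IsLeast {y : ℝ | 0 < y ∧ jacobiP α (2 * n) y = 0} x) :
    x ≥ π / (4 * Real.sqrt ((α + 1/2 + n) * ((n : ℝ) + 2))) := by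
  have hα₁ : -1 < α := by linarith
  have hn₃ : (3 : ℝ) ≤ n := by exact_mod_cast hn
  obtain ⟨hx₀, hPx⟩ := hx.1
  set K := (α + 1 / 2 + n) * ((n : ℝ) + 2) with hK_def
  have hK : 1 ≤ K := one_le_mul_of_one_le_of_one_le (by linarith) (by linarith)
  by_contra! hlt
  have hx₁ : x < 1 := hlt.trans_le <| (div_le_one (by positivity)).2 <| by
    nlinarith [pi_lt_four, one_le_sqrt.2 hK]
  have hθ : |2 * √K| * (x - -x) < π := by
    rw [lt_div_iff₀ (by positivity)] at hlt
    rw [abs_of_nonneg (by positivity)]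
    linarith
  obtain ⟨f', f'', hf⟩ := exists_hasDerivAt_jacobiP_ode hα₁ (2 * n)
  obtain ⟨t, ht, hle⟩ := exists_mem_Ioo_liouville_coeff_nonpos (by linarith) (by linarith) hx₁ hθ
    (fun t _ ↦ (hf t).1) (fun t _ ↦ (hf t).2.1) (fun t _ ↦ (hf t).2.2)
    (by rwa [jacobiP_two_mul_neg]) hPx
    fun t ht ↦ jacobiP_two_mul_ne_zero_of_abs_lt hα₁ hx (abs_lt.2 ht)
  have hQ := liouville_coeff_pos hα hn₃ ((abs_lt.2 ht).trans hlt)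
  rw [← hK_def] at hQ
  rw [mul_pow, sq_sqrt (by linarith)] at hle
  push_cast at hle
  linarith
end

section
/- Let P be a homogeneous polynomial of even degree 2k > 0 in d variables, and suppose that for each m there exists C_{2m} > 0 such that ⟨P·f, f⟩_{L²(S^{d−1})} ≥ C_{2m}·⟨f, f⟩_{L²(S^{d−1})} for all homogeneous polynomials f of degree 2m. Then for all homogeneous polynomials g of odd degree 2m+1, ⟨P·g, g⟩_{L²(S^{d−1})} ≥ C_{2m+2}·⟨g, g⟩_{L²(S^{d−1})}. -/
open MeasureTheory MvPolynomial

/-!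
On the unit sphere `∑ⱼ θⱼ² = 1`, so `|g(θ)|² = ∑ⱼ |θⱼ g(θ)|²`. Integrating against `P` and
against `1` writes both sides of the odd-degree inequality as sums over `j` of the corresponding
sides for the homogeneous polynomials `Xⱼ g` of even degree `2m + 2`, to which the hypothesis
applies termwise.
-/

variable {ι : Type*} [Fintype ι]

theorem EuclideanSpace.sum_sq_eq_one_of_mem_sphere {x : EuclideanSpace ℝ ι}
    (hx : x ∈ Metric.sphere (0 : EuclideanSpace ℝ ι) 1) : ∑ i, x i ^ 2 = 1 := by
  rw [← EuclideanSpace.real_norm_sq_eq, mem_sphere_zero_iff_norm.mp hx, one_pow]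

theorem MvPolynomial.sum_norm_sq_eval_X_mul (x : ι → ℝ) (g : MvPolynomial ι ℂ) :
    ∑ j, ‖eval (fun i => (x i : ℂ)) (X j * g)‖ ^ 2
      = (∑ j, x j ^ 2) * ‖eval (fun i => (x i : ℂ)) g‖ ^ 2 := by
  simp only [Finset.sum_mul, map_mul, eval_X, norm_mul, mul_pow, Complex.norm_real,
    Real.norm_eq_abs, sq_abs]

theorem MvPolynomial.continuous_eval_sphere (p : MvPolynomial ι ℂ) :
    Continuous fun θ : Metric.sphere (0 : EuclideanSpace ℝ ι) 1 =>
      eval (fun i => ((θ : EuclideanSpace ℝ ι) i : ℂ)) p :=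
  (continuous_eval p).comp <| continuous_pi fun i => Complex.continuous_ofReal.comp <|
    (continuous_apply i).comp <| (PiLp.continuous_ofLp 2 _).comp continuous_subtype_val

theorem MvPolynomial.continuous_eval_sphere_real (p : MvPolynomial ι ℝ) :
    Continuous fun θ : Metric.sphere (0 : EuclideanSpace ℝ ι) 1 =>
      eval (fun i => (θ : EuclideanSpace ℝ ι) i) p :=
  (continuous_eval p).comp <| continuous_pi fun i =>
    (continuous_apply i).comp <| (PiLp.continuous_ofLp 2 _).comp continuous_subtype_val

theorem MvPolynomial.integral_mul_norm_sq_eval_eq_sum_X_mul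
    (μ : Measure (Metric.sphere (0 : EuclideanSpace ℝ ι) 1)) [IsFiniteMeasure μ]
    {w : Metric.sphere (0 : EuclideanSpace ℝ ι) 1 → ℝ} (hw : Continuous w)
    (g : MvPolynomial ι ℂ) :
    ∫ θ, w θ * ‖eval (fun i => ((θ : EuclideanSpace ℝ ι) i : ℂ)) g‖ ^ 2 ∂μ
      = ∑ j, ∫ θ, w θ *
          ‖eval (fun i => ((θ : EuclideanSpace ℝ ι) i : ℂ)) (X j * g)‖ ^ 2 ∂μ := by
  have hint : ∀ j, Integrable (fun θ : Metric.sphere (0 : EuclideanSpace ℝ ι) 1 =>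
      w θ * ‖eval (fun i => ((θ : EuclideanSpace ℝ ι) i : ℂ)) (X j * g)‖ ^ 2) μ :=
    fun j =>
      (hw.mul ((continuous_eval_sphere (X j * g)).norm.pow 2)).integrable_of_hasCompactSupport
        (HasCompactSupport.of_compactSpace _)
  rw [← integral_finsetSum _ fun j _ => hint j]
  congr 1 with θ
  rw [← Finset.mul_sum, sum_norm_sq_eval_X_mul,
    EuclideanSpace.sum_sq_eq_one_of_mem_sphere θ.2, one_mul]

theorem MvPolynomial.integral_norm_sq_eval_eq_sum_X_mul
    (μ : Measure (Metric.sphere (0 : EuclideanSpace ℝ ι) 1)) [IsFiniteMeasure μ]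
    (g : MvPolynomial ι ℂ) :
    ∫ θ, ‖eval (fun i => ((θ : EuclideanSpace ℝ ι) i : ℂ)) g‖ ^ 2 ∂μ
      = ∑ j, ∫ θ, ‖eval (fun i => ((θ : EuclideanSpace ℝ ι) i : ℂ)) (X j * g)‖ ^ 2 ∂μ := by
  simpa only [one_mul] using
    integral_mul_norm_sq_eval_eq_sum_X_mul μ (continuous_const (y := (1 : ℝ))) g

theorem even_to_odd_degree_estimate_general (d : ℕ)
    (P : MvPolynomial (Fin d) ℝ)
    (C : ℕ → ℝ)
    (hineq : ∀ m : ℕ, ∀ f : MvPolynomial (Fin d) ℂ, f.IsHomogeneous (2 * m) →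
      (∫ θ : Metric.sphere (0 : EuclideanSpace ℝ (Fin d)) 1,
          MvPolynomial.eval (fun i => (θ : EuclideanSpace ℝ (Fin d)) i) P *
            ‖MvPolynomial.eval
              (fun i => ((θ : EuclideanSpace ℝ (Fin d)) i : ℂ)) f‖ ^ 2
          ∂((volume : Measure (EuclideanSpace ℝ (Fin d))).toSphere)) ≥
        C m *
          ∫ θ : Metric.sphere (0 : EuclideanSpace ℝ (Fin d)) 1,
            ‖MvPolynomial.eval
              (fun i => ((θ : EuclideanSpace ℝ (Fin d)) i : ℂ)) f‖ ^ 2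
            ∂((volume : Measure (EuclideanSpace ℝ (Fin d))).toSphere)) :
    ∀ m : ℕ, ∀ g : MvPolynomial (Fin d) ℂ, g.IsHomogeneous (2 * m + 1) →
      (∫ θ : Metric.sphere (0 : EuclideanSpace ℝ (Fin d)) 1,
          MvPolynomial.eval (fun i => (θ : EuclideanSpace ℝ (Fin d)) i) P *
            ‖MvPolynomial.eval
              (fun i => ((θ : EuclideanSpace ℝ (Fin d)) i : ℂ)) g‖ ^ 2
          ∂((volume : Measure (EuclideanSpace ℝ (Fin d))).toSphere)) ≥
        C (m + 1) *
          ∫ θ : Metric.sphere (0 : EuclideanSpace ℝ (Fin d)) 1,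
            ‖MvPolynomial.eval
              (fun i => ((θ : EuclideanSpace ℝ (Fin d)) i : ℂ)) g‖ ^ 2
            ∂((volume : Measure (EuclideanSpace ℝ (Fin d))).toSphere) := by
  intro m g hg
  have hXg : ∀ j, (X j * g).IsHomogeneous (2 * (m + 1)) := fun j => by
    simpa only [add_comm 1, mul_add_one, add_assoc] using (isHomogeneous_X ℂ j).mul hg
  rw [integral_mul_norm_sq_eval_eq_sum_X_mul _ (continuous_eval_sphere_real P),
    integral_norm_sq_eval_eq_sum_X_mul, Finset.mul_sum]
  exact Finset.sum_le_sum fun j _ => hineq (m + 1) (X j * g) (hXg j)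

theorem even_to_odd_degree_estimate (d : ℕ) (hd : 2 ≤ d)
    (P : MvPolynomial (Fin d) ℝ) (k : ℕ) (hk : 0 < k) (hP : P.IsHomogeneous (2 * k))
    (C : ℕ → ℝ) (hC : ∀ m : ℕ, 0 < C m)
    (hineq : ∀ m : ℕ, ∀ f : MvPolynomial (Fin d) ℂ, f.IsHomogeneous (2 * m) →
      (∫ θ : Metric.sphere (0 : EuclideanSpace ℝ (Fin d)) 1,
          MvPolynomial.eval (fun i => (θ : EuclideanSpace ℝ (Fin d)) i) P *
            ‖MvPolynomial.eval
              (fun i => ((θ : EuclideanSpace ℝ (Fin d)) i : ℂ)) f‖ ^ 2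
          ∂((volume : Measure (EuclideanSpace ℝ (Fin d))).toSphere)) ≥
        C m *
          ∫ θ : Metric.sphere (0 : EuclideanSpace ℝ (Fin d)) 1,
            ‖MvPolynomial.eval
              (fun i => ((θ : EuclideanSpace ℝ (Fin d)) i : ℂ)) f‖ ^ 2
            ∂((volume : Measure (EuclideanSpace ℝ (Fin d))).toSphere)) :
    ∀ m : ℕ, ∀ g : MvPolynomial (Fin d) ℂ, g.IsHomogeneous (2 * m + 1) →
      (∫ θ : Metric.sphere (0 : EuclideanSpace ℝ (Fin d)) 1,
          MvPolynomial.eval (fun i => (θ : EuclideanSpace ℝ (Fin d)) i) P *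
            ‖MvPolynomial.eval
              (fun i => ((θ : EuclideanSpace ℝ (Fin d)) i : ℂ)) g‖ ^ 2
          ∂((volume : Measure (EuclideanSpace ℝ (Fin d))).toSphere)) ≥
        C (m + 1) *
          ∫ θ : Metric.sphere (0 : EuclideanSpace ℝ (Fin d)) 1,
            ‖MvPolynomial.eval
              (fun i => ((θ : EuclideanSpace ℝ (Fin d)) i : ℂ)) g‖ ^ 2
            ∂((volume : Measure (EuclideanSpace ℝ (Fin d))).toSphere) :=
  even_to_odd_degree_estimate_general d P C hineq
end
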